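/- Let p be a positive integer and λ ∈ X^+(n) a p-restricted big weight. Then hat λ < λ in the dominance order on n-tuples of integers; in particular Σ_{k=1}^n (hat λ)_k = Σ_{k=1}^n λ_k, Σ_{k=1}^r (hat λ)_k ≤ Σ_{k=1}^r λ_k for every 1 ≤ r ≤ n, and hat λ ≠ λ. -/

import Mathlib

/-- `l` (one-based, entries `l 1, …, l n`) is a dominant weight of `X⁺(n)`:
weakly decreasing on positions `1, …, n`. -/
def Dominant (n : ℕ) (l : ℕ → ℤ) : Prop :=
  ∀ i : ℕ, 1 ≤ i → i < n → l (i + 1) ≤ l i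

/-- Row `i` is removable for `l ∈ X⁺(n)`: `1 ≤ i < n` and `l i > l (i+1)`. -/
def Removable (n : ℕ) (l : ℕ → ℤ) (i : ℕ) : Prop :=
  1 ≤ i ∧ i < n ∧ l (i + 1) < l i

/-- `l ∈ X⁺(n)` is `p`-restricted: `l i - l (i+1) < p` for `1 ≤ i < n`. -/
def PRestricted (p n : ℕ) (l : ℕ → ℤ) : Prop :=
  ∀ i : ℕ, 1 ≤ i → i < n → l i - l (i + 1) < (p : ℤ)

/-- `i` is the smallest removable row of `l`. -/
def IsSmallestRemovable (n : ℕ) (l : ℕ → ℤ) (i : ℕ) : Prop :=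
  Removable n l i ∧ ∀ k : ℕ, Removable n l k → i ≤ k

/-- `j` is the largest removable row of `l`. -/
def IsLargestRemovable (n : ℕ) (l : ℕ → ℤ) (j : ℕ) : Prop :=
  Removable n l j ∧ ∀ k : ℕ, Removable n l k → k ≤ j

open Classical in
/-- `ψ_n(l) = j - i + l i - l (j+1)` where `i`, `j` are the smallest and largest
removable rows of `l`; and `ψ_n(l) = 0` if `l` has no removable row. -/
noncomputable def psi (n : ℕ) (l : ℕ → ℤ) : ℤ :=
  if h : ∃ i : ℕ, Removable n l i then
    (Nat.findGreatest (Removable n l) n : ℤ) - (Nat.find h : ℤ)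
      + l (Nat.find h) - l (Nat.findGreatest (Removable n l) n + 1)
  else 0

/-- A `p`-restricted `l ∈ X⁺(n)` is big: it has a removable row and, with `i`, `j` the
smallest and largest removable rows, (1) `j - i + l i - l (j+1) ≤ p`;
(2) `l i - l (j+1) > 1`, `j - 1 + l i - l (j+1) ≥ p`, `i - l i + l (j+1) + p + 1 ≤ n`. -/
def Big (p n : ℕ) (l : ℕ → ℤ) : Prop :=
  ∃ i j : ℕ, IsSmallestRemovable n l i ∧ IsLargestRemovable n l j ∧
    (j : ℤ) - (i : ℤ) + l i - l (j + 1) ≤ (p : ℤ) ∧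
    1 < l i - l (j + 1) ∧
    (p : ℤ) ≤ (j : ℤ) - 1 + l i - l (j + 1) ∧
    (i : ℤ) - l i + l (j + 1) + (p : ℤ) + 1 ≤ (n : ℤ)

/-- For big `l` with smallest and largest removable rows `i`, `j`, setting
`a = j + l i - l (j+1) - p - 1` and `N = i - j - l i + l (j+1) + p + 1`, the weight
`hat l` is obtained from `l` by decreasing rows `a+1, …, a+N` by `1` and increasing
rows `j+1, …, j+N` by `1`. -/
def hatl (p : ℕ) (l : ℕ → ℤ) (i j : ℕ) (k : ℕ) : ℤ :=
  l k
    - (if (j : ℤ) + l i - l (j + 1) - (p : ℤ) - 1 + 1 ≤ (k : ℤ) ∧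
          (k : ℤ) ≤ (j : ℤ) + l i - l (j + 1) - (p : ℤ) - 1 +
            ((i : ℤ) - (j : ℤ) - l i + l (j + 1) + (p : ℤ) + 1) then 1 else 0)
    + (if (j : ℤ) + 1 ≤ (k : ℤ) ∧
          (k : ℤ) ≤ (j : ℤ) + ((i : ℤ) - (j : ℤ) - l i + l (j + 1) + (p : ℤ) + 1)
        then 1 else 0)

/-!
`hat l` moves a block of `N` boxes from rows `a+1, …, a+N` down to rows `j+1, …, j+N`, where
`a + N = i ≤ j` and `N ≥ 1` by condition (1) of bigness, `a ≥ 0` by condition (2) and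
`j + N ≤ n` by the last inequality of (2). Moving a block of boxes to lower rows keeps the
total and can only decrease partial sums, and row `i` itself loses a box.
-/

open Finset

def moveBlock (f : ℕ → ℤ) (a b N : ℤ) (k : ℕ) : ℤ :=
  f k - (if a + 1 ≤ (k : ℤ) ∧ (k : ℤ) ≤ a + N then 1 else 0)
    + (if b + 1 ≤ (k : ℤ) ∧ (k : ℤ) ≤ b + N then 1 else 0)

theorem hatl_eq_moveBlock (p : ℕ) (l : ℕ → ℤ) (i j : ℕ) :
    hatl p l i j = moveBlock l ((j : ℤ) + l i - l (j + 1) - p - 1) j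
      ((i : ℤ) - j - l i + l (j + 1) + p + 1) :=
  rfl

theorem sum_Icc_one_indicator (a b : ℤ) (r : ℕ) :
    ∑ k ∈ Icc 1 r, (if a + 1 ≤ (k : ℤ) ∧ (k : ℤ) ≤ b then (1 : ℤ) else 0)
      = max 0 (min (r : ℤ) b - max a 0) := by
  induction r with
  | zero => simp
  | succ r ih =>
    rw [sum_Icc_succ_top (by omega), ih]
    push_cast
    split_ifs <;> omega

theorem sum_Icc_moveBlock (f : ℕ → ℤ) (a b N : ℤ) (r : ℕ) :
    ∑ k ∈ Icc 1 r, moveBlock f a b N k = ∑ k ∈ Icc 1 r, f k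
      - max 0 (min (r : ℤ) (a + N) - max a 0) + max 0 (min (r : ℤ) (b + N) - max b 0) := by
  simp only [moveBlock, sum_add_distrib, sum_sub_distrib, sum_Icc_one_indicator]

theorem sum_Icc_moveBlock_le (f : ℕ → ℤ) {a b : ℤ} (N : ℤ) (ha : 0 ≤ a) (hab : a ≤ b)
    (r : ℕ) : ∑ k ∈ Icc 1 r, moveBlock f a b N k ≤ ∑ k ∈ Icc 1 r, f k := by
  rw [sum_Icc_moveBlock]; omega

theorem sum_Icc_moveBlock_eq (f : ℕ → ℤ) {a b N : ℤ} {r : ℕ} (ha : 0 ≤ a) (hb : 0 ≤ b)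
    (haN : a + N ≤ r) (hbN : b + N ≤ r) :
    ∑ k ∈ Icc 1 r, moveBlock f a b N k = ∑ k ∈ Icc 1 r, f k := by
  rw [sum_Icc_moveBlock]; omega

theorem moveBlock_of_mem_of_le (f : ℕ → ℤ) {a b N : ℤ} {k : ℕ} (hak : a + 1 ≤ k)
    (hkN : (k : ℤ) ≤ a + N) (hkb : (k : ℤ) ≤ b) : moveBlock f a b N k = f k - 1 := by
  simp only [moveBlock]
  split_ifs <;> omega

theorem IsSmallestRemovable.unique {n : ℕ} {l : ℕ → ℤ} {i i' : ℕ}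
    (hi : IsSmallestRemovable n l i) (hi' : IsSmallestRemovable n l i') : i = i' :=
  le_antisymm (hi.2 _ hi'.1) (hi'.2 _ hi.1)

theorem IsLargestRemovable.unique {n : ℕ} {l : ℕ → ℤ} {j j' : ℕ}
    (hj : IsLargestRemovable n l j) (hj' : IsLargestRemovable n l j') : j = j' :=
  le_antisymm (hj'.2 _ hj.1) (hj.2 _ hj'.1)

theorem stmt2_general (p n : ℕ) (l : ℕ → ℤ)
    (hbig : Big p n l) :
    ∀ i j : ℕ, IsSmallestRemovable n l i → IsLargestRemovable n l j →
      (∑ k ∈ Finset.Icc 1 n, hatl p l i j k = ∑ k ∈ Finset.Icc 1 n, l k) ∧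
      (∀ r : ℕ, 1 ≤ r → r ≤ n →
        ∑ k ∈ Finset.Icc 1 r, hatl p l i j k ≤ ∑ k ∈ Finset.Icc 1 r, l k) ∧
      (∃ k : ℕ, 1 ≤ k ∧ k ≤ n ∧ hatl p l i j k ≠ l k) := by
  intro i j hi hj
  obtain ⟨i', j', hi', hj', hψ, -, hpj, hNn⟩ := hbig
  obtain rfl := hi.unique hi'
  obtain rfl := hj.unique hj'
  have hin : i < n := hi.1.2.1
  have hij : i ≤ j := hi.2 j hj.1
  rw [hatl_eq_moveBlock]
  refine ⟨sum_Icc_moveBlock_eq l (by omega) (by omega) (by omega) (by omega),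
    fun r _ _ => sum_Icc_moveBlock_le l _ (by omega) (by omega) r,
    i, hi.1.1, hin.le, ?_⟩
  rw [moveBlock_of_mem_of_le l (by omega) (by omega) (by omega)]
  omega

/-- For a `p`-restricted big weight `l ∈ X⁺(n)`, we have `hat l < l` in the
dominance order: the total sums over `1, …, n` agree, all partial sums of `hat l` are at
most those of `l`, and `hat l ≠ l` (on positions `1, …, n`). -/
theorem stmt2 (p n : ℕ) (hp : 1 ≤ p) (l : ℕ → ℤ)
    (hdom : Dominant n l) (hres : PRestricted p n l) (hbig : Big p n l) :
    ∀ i j : ℕ, IsSmallestRemovable n l i → IsLargestRemovable n l j →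
      (∑ k ∈ Finset.Icc 1 n, hatl p l i j k = ∑ k ∈ Finset.Icc 1 n, l k) ∧
      (∀ r : ℕ, 1 ≤ r → r ≤ n →
        ∑ k ∈ Finset.Icc 1 r, hatl p l i j k ≤ ∑ k ∈ Finset.Icc 1 r, l k) ∧
      (∃ k : ℕ, 1 ≤ k ∧ k ≤ n ∧ hatl p l i j k ≠ l k) :=
  stmt2_general p n l hbig
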